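/- Let S be a unital epsilon-strongly G-graded ring, {e_1, …, e_k} its set of epsilon-central elements, and e' = 1_S − Σ_{j=1}^k e_j. If e' ≠ 0, then e'S is epsilon-strongly G-graded with ε'_g = e' ε_g for each g ∈ G. -/

import Mathlib

open Pointwise

section Defs

variable {G : Type} [AddGroup G] [DecidableEq G]
variable {A : Type} [Ring A]
variable {M : Type} [AddCommGroup M] [Module A M]

/-- The additive subgroup of `M` consisting of finite sums of products `a • m`
with `a ∈ S` and `m ∈ N`. -/
def prodSMul (S : AddSubgroup A) (N : AddSubgroup M) : AddSubgroup M where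
  __ := S.toAddSubmonoid • N.toAddSubmonoid
  neg_mem' {x} hx := by
    refine AddSubmonoid.smul_induction_on hx (fun a ha m hm => ?_) (fun x y hx hy => ?_)
    · rw [show -(a • m) = (-a) • m by rw [neg_smul]]
      exact AddSubmonoid.smul_mem_smul (S.neg_mem ha) hm
    · rw [neg_add]
      exact (S.toAddSubmonoid • N.toAddSubmonoid).add_mem hx hy

/-- A (possibly non-unital) ring, here an additive subgroup of `A` closed under
multiplication, is *s-unital* if every element has a left and a right local unit in it. -/
def IsSUnitalSub (I : AddSubgroup A) : Prop :=
  ∀ a ∈ I, ∃ u ∈ I, ∃ v ∈ I, u * a = a ∧ a * v = a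

variable (𝒜 : G → AddSubgroup A)

/-- `S` is symmetrically graded if `S_g S_{g⁻¹} S_g = S_g` for all `g`. -/
def IsSymmetricallyGraded : Prop := ∀ g : G, 𝒜 g * 𝒜 (-g) * 𝒜 g = 𝒜 g

/-- `S` is nearly epsilon-strongly graded if each `S_g` is an s-unital
`(S_g S_{g⁻¹}, S_{g⁻¹} S_g)`-bimodule: for every `s ∈ S_g` there are
`u ∈ S_g S_{g⁻¹}` and `v ∈ S_{g⁻¹} S_g` with `u s = s = s v`. -/
def IsNearlyEpsilonStrong : Prop :=
  ∀ g : G, ∀ s ∈ 𝒜 g, ∃ u ∈ 𝒜 g * 𝒜 (-g), ∃ v ∈ 𝒜 (-g) * 𝒜 g, u * s = s ∧ s * v = s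


section EpsilonCentral

variable {G : Type} [AddGroup G] [DecidableEq G]
variable {A : Type} [Ring A]

/-- `r` is an epsilon-central element for the family `ε`: a minimal nonzero element of
the boolean semigroup generated by `{ε_g : g ∈ G}` that is central in `S`. -/
def IsEpsilonCentral (ε : G → A) (r : A) : Prop :=
  r ∈ Subsemigroup.closure (Set.range ε) ∧ r ≠ 0 ∧
    (∀ a ∈ Subsemigroup.closure (Set.range ε), a ≠ 0 → a * r = a → a = r) ∧
    ∀ x : A, r * x = x * r

/-- The image `e S_g` of a homogeneous component under left multiplication by `e`. -/
def cornerComponent (e : A) (S : AddSubgroup A) : AddSubgroup A :=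
  S.map (AddMonoidHom.mulLeft e)

end EpsilonCentral

/-!
The `ε_g` are idempotents of `S_0` that commute with all of `S_0` (an element `s ∈ S_0` turns
`S_g S_{g⁻¹}` into itself from either side, and `ε_g` is a two-sided unit there), so the semigroup
they generate consists of commuting idempotents. By minimality, the product of two distinct
epsilon-central elements would be a smaller nonzero element of that semigroup, hence it is zero:
the epsilon-central elements are orthogonal central idempotents, and `e' = 1 - Σ e_j` is a central
idempotent. For a central idempotent `e`, left multiplication by `e` is multiplicative, which
carries `ε_g ∈ S_g S_{g⁻¹}` and the identities `ε_g s = s = s ε_{g⁻¹}` over to the corner `eS`.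
-/

theorem AddSubgroup.mul_mem_mul {R : Type*} [NonUnitalNonAssocRing R] {S T : AddSubgroup R}
    {a b : R} (ha : a ∈ S) (hb : b ∈ T) : a * b ∈ S * T :=
  AddSubmonoid.mul_mem_mul ha hb

@[elab_as_elim]
theorem AddSubgroup.mul_induction_on {R : Type*} [NonUnitalNonAssocRing R]
    {S T : AddSubgroup R} {C : R → Prop} {x : R} (hx : x ∈ S * T)
    (mul : ∀ a ∈ S, ∀ b ∈ T, C (a * b)) (add : ∀ x y, C x → C y → C (x + y)) : C x :=
  AddSubmonoid.mul_induction_on hx mul add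

section Graded

variable {ι R : Type*} [AddGroup ι] [Ring R] {𝒜 : ι → AddSubgroup R} {ε : ι → R}

theorem eps_mul_eq_of_mem_mul (hunit : ∀ g, ∀ s ∈ 𝒜 g, ε g * s = s ∧ s * ε (-g) = s)
    {g : ι} {x : R} (hx : x ∈ 𝒜 g * 𝒜 (-g)) : ε g * x = x := by
  refine AddSubgroup.mul_induction_on hx (fun a ha b _ => ?_) (fun x y hx hy => ?_)
  · rw [← mul_assoc, (hunit g a ha).1]
  · rw [mul_add, hx, hy]

theorem mul_eps_eq_of_mem_mul (hunit : ∀ g, ∀ s ∈ 𝒜 g, ε g * s = s ∧ s * ε (-g) = s)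
    {g : ι} {x : R} (hx : x ∈ 𝒜 g * 𝒜 (-g)) : x * ε g = x := by
  refine AddSubgroup.mul_induction_on hx (fun a _ b hb => ?_) (fun x y hx hy => ?_)
  · have hb' : b * ε g = b := by simpa only [neg_neg] using (hunit (-g) b hb).2
    rw [mul_assoc, hb']
  · rw [add_mul, hx, hy]

variable [SetLike.GradedMul 𝒜]

theorem mem_zero_of_mem_mul_neg {g : ι} {x : R} (hx : x ∈ 𝒜 g * 𝒜 (-g)) : x ∈ 𝒜 0 := by
  refine AddSubgroup.mul_induction_on hx (fun a ha b hb => ?_) (fun _ _ => add_mem)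
  simpa only [add_neg_cancel] using SetLike.mul_mem_graded ha hb

theorem mul_mem_mul_neg_of_mem_zero_right {g : ι} {x s : R} (hx : x ∈ 𝒜 g * 𝒜 (-g))
    (hs : s ∈ 𝒜 0) : x * s ∈ 𝒜 g * 𝒜 (-g) := by
  refine AddSubgroup.mul_induction_on hx (fun a ha b hb => ?_) (fun x y hx hy => ?_)
  · rw [mul_assoc]
    exact AddSubgroup.mul_mem_mul ha (by simpa only [add_zero] using SetLike.mul_mem_graded hb hs)
  · rw [add_mul]
    exact add_mem hx hy

theorem mul_mem_mul_neg_of_mem_zero_left {g : ι} {x s : R} (hx : x ∈ 𝒜 g * 𝒜 (-g))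
    (hs : s ∈ 𝒜 0) : s * x ∈ 𝒜 g * 𝒜 (-g) := by
  refine AddSubgroup.mul_induction_on hx (fun a ha b hb => ?_) (fun x y hx hy => ?_)
  · rw [← mul_assoc]
    exact AddSubgroup.mul_mem_mul (by simpa only [zero_add] using SetLike.mul_mem_graded hs ha) hb
  · rw [mul_add]
    exact add_mem hx hy

theorem commute_eps_of_mem_zero (hmem : ∀ g, ε g ∈ 𝒜 g * 𝒜 (-g))
    (hunit : ∀ g, ∀ s ∈ 𝒜 g, ε g * s = s ∧ s * ε (-g) = s)
    (g : ι) {s : R} (hs : s ∈ 𝒜 0) : Commute (ε g) s :=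
  calc ε g * s = ε g * s * ε g :=
        (mul_eps_eq_of_mem_mul hunit (mul_mem_mul_neg_of_mem_zero_right (hmem g) hs)).symm
    _ = s * ε g := by
        rw [mul_assoc, eps_mul_eq_of_mem_mul hunit (mul_mem_mul_neg_of_mem_zero_left (hmem g) hs)]

theorem mem_zero_of_mem_closure_range (hmem : ∀ g, ε g ∈ 𝒜 g * 𝒜 (-g)) {x : R}
    (hx : x ∈ Subsemigroup.closure (Set.range ε)) : x ∈ 𝒜 0 := by
  induction hx using Subsemigroup.closure_induction with
  | mem _ hz =>
    obtain ⟨g, rfl⟩ := hz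
    exact mem_zero_of_mem_mul_neg (hmem g)
  | mul x y _ _ hx hy => simpa only [add_zero] using SetLike.mul_mem_graded hx hy

theorem commute_of_mem_closure_range (hmem : ∀ g, ε g ∈ 𝒜 g * 𝒜 (-g))
    (hunit : ∀ g, ∀ s ∈ 𝒜 g, ε g * s = s ∧ s * ε (-g) = s)
    {x s : R} (hx : x ∈ Subsemigroup.closure (Set.range ε)) (hs : s ∈ 𝒜 0) : Commute x s := by
  induction hx using Subsemigroup.closure_induction with
  | mem _ hz =>
    obtain ⟨g, rfl⟩ := hz
    exact commute_eps_of_mem_zero hmem hunit g hs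
  | mul x y _ _ hx hy => exact hx.mul_left hy

theorem isIdempotentElem_of_mem_closure_range (hmem : ∀ g, ε g ∈ 𝒜 g * 𝒜 (-g))
    (hunit : ∀ g, ∀ s ∈ 𝒜 g, ε g * s = s ∧ s * ε (-g) = s)
    {x : R} (hx : x ∈ Subsemigroup.closure (Set.range ε)) : IsIdempotentElem x := by
  induction hx using Subsemigroup.closure_induction with
  | mem _ hz =>
    obtain ⟨g, rfl⟩ := hz
    exact eps_mul_eq_of_mem_mul hunit (hmem g)
  | mul x y hx' hy' hx hy =>
    exact hx.mul_of_commute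
      (commute_of_mem_closure_range hmem hunit hx' (mem_zero_of_mem_closure_range hmem hy')) hy

end Graded

section EpsilonCentral

variable {G A : Type} [Ring A] {ε : G → A}

theorem IsEpsilonCentral.mem_center {e : A} (he : IsEpsilonCentral ε e) : e ∈ Subring.center A :=
  Subring.mem_center_iff.2 fun x => (he.2.2.2 x).symm

theorem IsEpsilonCentral.mul_eq_zero_of_ne
    (hidem : ∀ x ∈ Subsemigroup.closure (Set.range ε), IsIdempotentElem x) {e f : A}
    (he : IsEpsilonCentral ε e) (hf : IsEpsilonCentral ε f) (hne : e ≠ f) : e * f = 0 := by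
  by_contra hef
  have hef_mem : e * f ∈ Subsemigroup.closure (Set.range ε) := mul_mem he.1 hf.1
  have hefe : e * f * e = e * f := by rw [mul_assoc, ← he.2.2.2 f, ← mul_assoc, hidem e he.1]
  have heff : e * f * f = e * f := by rw [mul_assoc, hidem f hf.1]
  exact hne ((he.2.2.1 _ hef_mem hef hefe).symm.trans (hf.2.2.1 _ hef_mem hef heff))

theorem orthogonalIdempotents_of_isEpsilonCentral
    (hidem : ∀ x ∈ Subsemigroup.closure (Set.range ε), IsIdempotentElem x) {E : Finset A}
    (hE : ∀ x ∈ E, IsEpsilonCentral ε x) : OrthogonalIdempotents ((↑) : E → A) where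
  idem x := hidem x (hE x x.2).1
  ortho x y hxy := (hE x x.2).mul_eq_zero_of_ne hidem (hE y y.2) (Subtype.coe_ne_coe.2 hxy)

end EpsilonCentral

section Corner

variable {R : Type} [Ring R] {e : R}

theorem mul_mul_mul_of_mem_center (hc : e ∈ Subring.center R) (hidem : IsIdempotentElem e)
    (x y : R) : e * x * (e * y) = e * (x * y) := by
  rw [mul_assoc, ← mul_assoc x, Subring.mem_center_iff.1 hc x, mul_assoc, ← mul_assoc, hidem.eq]

theorem mul_mem_cornerComponent_mul (hc : e ∈ Subring.center R) (hidem : IsIdempotentElem e)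
    {S T : AddSubgroup R} {x : R} (hx : x ∈ S * T) :
    e * x ∈ cornerComponent e S * cornerComponent e T := by
  refine AddSubgroup.mul_induction_on hx (fun a ha b hb => ?_) (fun x y hx hy => ?_)
  · rw [← mul_mul_mul_of_mem_center hc hidem]
    exact AddSubgroup.mul_mem_mul ⟨a, ha, rfl⟩ ⟨b, hb, rfl⟩
  · rw [mul_add]
    exact add_mem hx hy

end Corner

theorem corner_epsilonStrong_of_complement
    {G : Type} [AddGroup G] [DecidableEq G]
    {A : Type} [Ring A] (𝒜 : G → AddSubgroup A) [GradedRing 𝒜]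
    (ε : G → A)
    (hmem : ∀ g : G, ε g ∈ 𝒜 g * 𝒜 (-g))
    (hunit : ∀ g : G, ∀ s ∈ 𝒜 g, ε g * s = s ∧ s * ε (-g) = s)
    (E : Finset A) (hE : ∀ x : A, x ∈ E ↔ IsEpsilonCentral ε x) :
    ∀ g : G,
      ((1 - ∑ x ∈ E, x) * ε g
          ∈ cornerComponent (1 - ∑ x ∈ E, x) (𝒜 g)
            * cornerComponent (1 - ∑ x ∈ E, x) (𝒜 (-g))) ∧
      ∀ s ∈ 𝒜 g,
        ((1 - ∑ x ∈ E, x) * ε g) * ((1 - ∑ x ∈ E, x) * s) = (1 - ∑ x ∈ E, x) * s ∧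
        ((1 - ∑ x ∈ E, x) * s) * ((1 - ∑ x ∈ E, x) * ε (-g)) = (1 - ∑ x ∈ E, x) * s := by
  intro g
  have hcentral : ∀ x ∈ E, IsEpsilonCentral ε x := fun x hx => (hE x).1 hx
  have hsum_idem : IsIdempotentElem (∑ x ∈ E, x) :=
    Finset.sum_coe_sort E id ▸ (orthogonalIdempotents_of_isEpsilonCentral
      (fun _ => isIdempotentElem_of_mem_closure_range hmem hunit) hcentral).isIdempotentElem_sum
  have hc : 1 - ∑ x ∈ E, x ∈ Subring.center A :=
    sub_mem (one_mem _) (Subring.sum_mem _ fun x hx => (hcentral x hx).mem_center)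
  have hidem : IsIdempotentElem (1 - ∑ x ∈ E, x) := hsum_idem.one_sub
  refine ⟨mul_mem_cornerComponent_mul hc hidem (hmem g), fun s hs => ⟨?_, ?_⟩⟩
  · rw [mul_mul_mul_of_mem_center hc hidem, (hunit g s hs).1]
  · rw [mul_mul_mul_of_mem_center hc hidem, (hunit g s hs).2]
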